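/- arXiv:2402.08591 — 2 statements merged into one kernel-verified Lean document; each statement's English description precedes it below -/
import Mathlib

section
/- Let (Ω, μ) be a measure space, 1 < p < ∞ with conjugate exponent q, let 1 < r ≤ min{p, q} and s the conjugate exponent of r. Let M, N ⊆ L^p(Ω, μ), A : M → L^p(Ω, μ), B : N → L^p(Ω, μ) arbitrary maps, f ∈ M ∩ N, a, b ∈ ℂ. Then for every bounded linear functional φ on L^p(Ω, μ) with ‖φ‖ ≤ 1 and φ(f) = 0: ‖Af − a·f‖_p^s + ‖Bf − b·f‖_p^s ≥ (1/2^{s−1})(|φ(Af + Bf)|^s + |φ(Af − Bf)|^s). -/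
/-!
Since `r ≤ min p q ≤ 2`, the exponent `s` is at least `2`. As `φ f = 0`, the values
`φ (A f ± B f)` equal `φ (u ± v)` with `u = A f - a • f` and `v = B f - b • f`. For `s ≥ 2` the
parallelogram law gives the Clarkson inequality
`‖z + w‖ ^ s + ‖z - w‖ ^ s ≤ 2 ^ (s - 1) * (‖z‖ ^ s + ‖w‖ ^ s)` in any inner product space, in
particular in `ℂ`; applying it to `φ u, φ v` and using `‖φ‖ ≤ 1` concludes.
-/

open MeasureTheory NNReal

/-- Convexity of `t ↦ t ^ (s / 2)` on both sides: superadditivity bounds `x ^ s + y ^ s` by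
`(x ^ 2 + y ^ 2) ^ (s / 2)`, and the power-mean inequality bounds `(a ^ 2 + b ^ 2) ^ (s / 2)`. -/
theorem NNReal.rpow_add_rpow_le_of_sq_add_sq_eq {s : ℝ} (hs : 2 ≤ s) {x y a b : ℝ≥0}
    (h : x ^ 2 + y ^ 2 = 2 * (a ^ 2 + b ^ 2)) :
    x ^ s + y ^ s ≤ 2 ^ (s - 1) * (a ^ s + b ^ s) := by
  have ht : 1 ≤ s / 2 := by linarith
  have hpow (z : ℝ≥0) : z ^ s = (z ^ 2) ^ (s / 2) := by
    rw [← NNReal.rpow_natCast_mul]; congr 1; push_cast; ring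
  calc x ^ s + y ^ s ≤ (x ^ 2 + y ^ 2) ^ (s / 2) := by
        rw [hpow x, hpow y]; exact NNReal.add_rpow_le_rpow_add _ _ ht
    _ = 2 ^ (s / 2) * (a ^ 2 + b ^ 2) ^ (s / 2) := by rw [h, NNReal.mul_rpow]
    _ ≤ 2 ^ (s / 2) * (2 ^ (s / 2 - 1) * ((a ^ 2) ^ (s / 2) + (b ^ 2) ^ (s / 2))) := by
        gcongr; exact NNReal.rpow_add_le_mul_rpow_add_rpow _ _ ht
    _ = 2 ^ (s - 1) * (a ^ s + b ^ s) := by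
        rw [← hpow, ← hpow, ← mul_assoc, ← NNReal.rpow_add two_ne_zero]; ring_nf

section Clarkson

variable {𝕜 : Type*} [RCLike 𝕜] {s : ℝ}

theorem norm_add_rpow_add_norm_sub_rpow_le {E : Type*} [NormedAddCommGroup E]
    [InnerProductSpace 𝕜 E] (hs : 2 ≤ s) (x y : E) :
    ‖x + y‖ ^ s + ‖x - y‖ ^ s ≤ 2 ^ (s - 1) * (‖x‖ ^ s + ‖y‖ ^ s) := by
  have h := NNReal.rpow_add_rpow_le_of_sq_add_sq_eq hs (parallelogram_law_with_nnnorm 𝕜 x y)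
  exact_mod_cast h

theorem ContinuousLinearMap.norm_map_add_rpow_add_norm_map_sub_rpow_le {E F : Type*}
    [NormedAddCommGroup E] [NormedSpace 𝕜 E] [NormedAddCommGroup F] [InnerProductSpace 𝕜 F]
    (φ : E →L[𝕜] F) (hφ : ‖φ‖ ≤ 1) (hs : 2 ≤ s) (x y : E) :
    ‖φ (x + y)‖ ^ s + ‖φ (x - y)‖ ^ s ≤ 2 ^ (s - 1) * (‖x‖ ^ s + ‖y‖ ^ s) := by
  have hs0 : 0 ≤ s := by linarith
  rw [map_add, map_sub]
  calc ‖φ x + φ y‖ ^ s + ‖φ x - φ y‖ ^ s ≤ 2 ^ (s - 1) * (‖φ x‖ ^ s + ‖φ y‖ ^ s) :=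
        norm_add_rpow_add_norm_sub_rpow_le (𝕜 := 𝕜) hs _ _
    _ ≤ 2 ^ (s - 1) * (‖x‖ ^ s + ‖y‖ ^ s) := by
        gcongr <;> exact (φ.le_of_opNorm_le hφ _).trans_eq (one_mul _)

end Clarkson

theorem min_self_div_sub_one_le_two (p : ℝ) : min p (p / (p - 1)) ≤ 2 := by
  rcases le_or_gt p 2 with h | h
  · exact (min_le_left _ _).trans h
  · exact (min_le_right _ _).trans <| (div_le_iff₀ (by linarith)).2 (by linarith)

theorem two_le_div_sub_one {r : ℝ} (hr1 : 1 < r) (hr2 : r ≤ 2) : 2 ≤ r / (r - 1) :=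
  (le_div_iff₀ (by linarith)).2 (by linarith)

theorem nonlinear_maccone_pati_generalized_clarkson_s_general
    {Ω : Type*} [MeasurableSpace Ω] (μ : Measure Ω) (p q r s : ℝ)
    (hq : q = p / (p - 1))
    (hr1 : 1 < r) (hr2 : r ≤ min p q) (hs : s = r / (r - 1)) [Fact (1 ≤ ENNReal.ofReal p)]
    (M N : Set (Lp ℂ (ENNReal.ofReal p) μ))
    (A : M → Lp ℂ (ENNReal.ofReal p) μ) (B : N → Lp ℂ (ENNReal.ofReal p) μ)
    (f : Lp ℂ (ENNReal.ofReal p) μ) (hfM : f ∈ M) (hfN : f ∈ N) (a b : ℂ)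
    (φ : Lp ℂ (ENNReal.ofReal p) μ →L[ℂ] ℂ) (hφ : ‖φ‖ ≤ 1) (hφf : φ f = 0) :
    ‖A ⟨f, hfM⟩ - a • f‖ ^ s + ‖B ⟨f, hfN⟩ - b • f‖ ^ s ≥
      (1 / 2 ^ (s - 1)) *
        (‖φ (A ⟨f, hfM⟩ + B ⟨f, hfN⟩)‖ ^ s + ‖φ (A ⟨f, hfM⟩ - B ⟨f, hfN⟩)‖ ^ s) := by
  have hs2 : 2 ≤ s :=
    hs ▸ two_le_div_sub_one hr1 (hr2.trans (hq ▸ min_self_div_sub_one_le_two p))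
  set u := A ⟨f, hfM⟩ - a • f
  set v := B ⟨f, hfN⟩ - b • f
  have hφ_add_smul (g : Lp ℂ (ENNReal.ofReal p) μ) (c : ℂ) : φ (g + c • f) = φ g := by
    rw [map_add, map_smul, hφf, smul_zero, add_zero]
  have hsum : φ (A ⟨f, hfM⟩ + B ⟨f, hfN⟩) = φ (u + v) := by
    rw [← hφ_add_smul (u + v) (a + b)]; congr 1; module
  have hdiff : φ (A ⟨f, hfM⟩ - B ⟨f, hfN⟩) = φ (u - v) := by
    rw [← hφ_add_smul (u - v) (a - b)]; congr 1; module
  rw [ge_iff_le, one_div, inv_mul_le_iff₀ (by positivity), hsum, hdiff]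
  exact φ.norm_map_add_rpow_add_norm_map_sub_rpow_le hφ hs2 u v

theorem nonlinear_maccone_pati_generalized_clarkson_s
    {Ω : Type*} [MeasurableSpace Ω] (μ : Measure Ω) (p q r s : ℝ)
    (hp1 : 1 < p) (hq : q = p / (p - 1))
    (hr1 : 1 < r) (hr2 : r ≤ min p q) (hs : s = r / (r - 1)) [Fact (1 ≤ ENNReal.ofReal p)]
    (M N : Set (Lp ℂ (ENNReal.ofReal p) μ))
    (A : M → Lp ℂ (ENNReal.ofReal p) μ) (B : N → Lp ℂ (ENNReal.ofReal p) μ)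
    (f : Lp ℂ (ENNReal.ofReal p) μ) (hfM : f ∈ M) (hfN : f ∈ N) (a b : ℂ)
    (φ : Lp ℂ (ENNReal.ofReal p) μ →L[ℂ] ℂ) (hφ : ‖φ‖ ≤ 1) (hφf : φ f = 0) :
    ‖A ⟨f, hfM⟩ - a • f‖ ^ s + ‖B ⟨f, hfN⟩ - b • f‖ ^ s ≥
      (1 / 2 ^ (s - 1)) *
        (‖φ (A ⟨f, hfM⟩ + B ⟨f, hfN⟩)‖ ^ s + ‖φ (A ⟨f, hfM⟩ - B ⟨f, hfN⟩)‖ ^ s) :=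
  nonlinear_maccone_pati_generalized_clarkson_s_general μ p q r s hq hr1 hr2 hs M N A B f hfM hfN a
    b φ hφ hφf
end

section
/- Let (Ω, μ) be a measure space and 2 ≤ p < ∞ with conjugate exponent q = p/(p−1). Then for all f, g ∈ L^p(Ω, μ): ‖f‖_p^q + ‖g‖_p^q ≥ ((1/2)(‖f + g‖_p^p + ‖f − g‖_p^p))^{1/(p−1)}. -/
open MeasureTheory Real

/-!
For complex `a, b` the pointwise inequality `‖a + b‖^p + ‖a - b‖^p ≤ 2 (‖a‖^q + ‖b‖^q)^(p-1)`
says that `(a, b) ↦ (a + b, a - b)` maps `ℓ^q` to `ℓ^p` with norm at most `2^(1/p)`. This is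
Riesz–Thorin: the map has norm `1` from `ℓ¹` to `ℓ^∞` and norm `√2` on `ℓ²` (parallelogram law),
and `ℓ^q → ℓ^p` sits at parameter `θ = 2/p` between them; the interpolation is Hadamard's three
lines theorem applied to the associated bilinear form. Integrating the pointwise inequality and
applying Minkowski's inequality in `L^(p-1)` to `‖f‖^q` and `‖g‖^q` gives the theorem.
-/

open Complex ComplexConjugate

noncomputable def phaseCpow (x w : ℂ) : ℂ := x / ‖x‖ * (‖x‖ : ℂ) ^ w

lemma phaseCpow_one (x : ℂ) : phaseCpow x 1 = x := by
  rcases eq_or_ne x 0 with rfl | hx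
  · simp [phaseCpow]
  · rw [phaseCpow, cpow_one, div_mul_cancel₀ _ (ofReal_ne_zero.mpr (norm_ne_zero_iff.mpr hx))]

lemma differentiable_phaseCpow (x : ℂ) : Differentiable ℂ (phaseCpow x) := by
  rcases eq_or_ne x 0 with rfl | hx
  · unfold phaseCpow
    simp
  · exact (differentiable_id.const_cpow
      (Or.inl (ofReal_ne_zero.mpr (norm_ne_zero_iff.mpr hx)))).const_mul _

lemma norm_phaseCpow_le (x w : ℂ) : ‖phaseCpow x w‖ ≤ ‖x‖ ^ w.re := by
  rcases eq_or_ne x 0 with rfl | hx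
  · simpa [phaseCpow] using rpow_nonneg le_rfl _
  · have hx' : 0 < ‖x‖ := norm_pos_iff.mpr hx
    rw [phaseCpow, norm_mul, norm_div, norm_real, norm_norm, div_self hx'.ne', one_mul,
      norm_cpow_eq_rpow_re_of_pos hx']

def clarksonPairing (a₁ a₂ b₁ b₂ : ℂ) : ℂ := b₁ * (a₁ + a₂) + b₂ * (a₁ - a₂)

lemma norm_clarksonPairing_le (a₁ a₂ b₁ b₂ : ℂ) :
    ‖clarksonPairing a₁ a₂ b₁ b₂‖ ≤ ‖b₁‖ * ‖a₁ + a₂‖ + ‖b₂‖ * ‖a₁ - a₂‖ :=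
  (norm_add_le _ _).trans_eq (by rw [norm_mul, norm_mul])

lemma norm_clarksonPairing_le_l1 (a₁ a₂ b₁ b₂ : ℂ) :
    ‖clarksonPairing a₁ a₂ b₁ b₂‖ ≤ (‖a₁‖ + ‖a₂‖) * (‖b₁‖ + ‖b₂‖) := by
  have := norm_clarksonPairing_le a₁ a₂ b₁ b₂
  have := norm_add_le a₁ a₂
  have := norm_sub_le a₁ a₂
  nlinarith [norm_nonneg b₁, norm_nonneg b₂]

lemma norm_clarksonPairing_sq_le_l2 (a₁ a₂ b₁ b₂ : ℂ) :
    ‖clarksonPairing a₁ a₂ b₁ b₂‖ ^ 2 ≤ 2 * (‖a₁‖ ^ 2 + ‖a₂‖ ^ 2) * (‖b₁‖ ^ 2 + ‖b₂‖ ^ 2) := by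
  have hT := norm_clarksonPairing_le a₁ a₂ b₁ b₂
  have hpar := parallelogram_law_with_norm ℝ a₁ a₂
  calc ‖clarksonPairing a₁ a₂ b₁ b₂‖ ^ 2 ≤ (‖b₁‖ * ‖a₁ + a₂‖ + ‖b₂‖ * ‖a₁ - a₂‖) ^ 2 :=
        pow_le_pow_left₀ (norm_nonneg _) hT 2
    _ ≤ (‖a₁ + a₂‖ ^ 2 + ‖a₁ - a₂‖ ^ 2) * (‖b₁‖ ^ 2 + ‖b₂‖ ^ 2) := by
        nlinarith [sq_nonneg (‖b₁‖ * ‖a₁ - a₂‖ - ‖b₂‖ * ‖a₁ + a₂‖)]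
    _ = _ := by rw [hpar]

lemma norm_phaseCpow_mul_le (x : ℂ) (q : ℝ) (z : ℂ) :
    ‖phaseCpow x (q * (1 - z / 2))‖ ≤ (‖x‖ ^ q) ^ (1 - z.re / 2) := by
  rw [← rpow_mul (norm_nonneg x)]
  convert norm_phaseCpow_le x _ using 2
  simp

open HadamardThreeLines in
/-- Three lines along `z ↦ (phaseCpow xᵢ (q (1 - z/2)))ᵢ`: its entries have modulus `‖xᵢ‖^q` on
`Re z = 0` and `‖xᵢ‖^(q/2)` on `Re z = 1`, and it passes through `(xᵢ)ᵢ` at `z = 2/p`. -/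
lemma norm_clarksonPairing_le_two_rpow {p q : ℝ} (hp : 2 ≤ p) (hq : q = p / (p - 1))
    {a₁ a₂ b₁ b₂ : ℂ} (ha : ‖a₁‖ ^ q + ‖a₂‖ ^ q ≤ 1) (hb : ‖b₁‖ ^ q + ‖b₂‖ ^ q ≤ 1) :
    ‖clarksonPairing a₁ a₂ b₁ b₂‖ ≤ 2 ^ (1 / p) := by
  have hp0 : 0 < p := by linarith
  have hp1 : p - 1 ≠ 0 := by linarith
  set F : ℂ → ℂ := fun z ↦ clarksonPairing (phaseCpow a₁ (q * (1 - z / 2)))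
    (phaseCpow a₂ (q * (1 - z / 2))) (phaseCpow b₁ (q * (1 - z / 2)))
    (phaseCpow b₂ (q * (1 - z / 2)))
  have hF : Differentiable ℂ F := by
    have := fun x ↦ (differentiable_phaseCpow x).comp
      (((differentiable_const (1 : ℂ)).sub (differentiable_id.div_const 2)).const_mul (q : ℂ))
    exact ((this b₁).mul ((this a₁).add (this a₂))).add ((this b₂).mul ((this a₁).sub (this a₂)))
  have hs := fun x : ℂ ↦ rpow_nonneg (norm_nonneg x) q
  have hbdd : BddAbove ((norm ∘ F) '' verticalClosedStrip 0 1) := by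
    refine ⟨4, ?_⟩
    rintro _ ⟨z, ⟨hz0, hz1⟩, rfl⟩
    have hle : ∀ x : ℂ, ‖x‖ ^ q ≤ 1 → ‖phaseCpow x (q * (1 - z / 2))‖ ≤ 1 := fun x hx ↦
      (norm_phaseCpow_mul_le x q z).trans (rpow_le_one (hs x) hx (by linarith))
    have h₁ := hle a₁ (by linarith [hs a₂]); have h₂ := hle a₂ (by linarith [hs a₁])
    have h₃ := hle b₁ (by linarith [hs b₂]); have h₄ := hle b₂ (by linarith [hs b₁])
    exact (norm_clarksonPairing_le_l1 _ _ _ _).trans <|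
      (mul_le_mul (add_le_add h₁ h₂) (add_le_add h₃ h₄) (by positivity) (by norm_num)).trans
        (by norm_num)
  have hedge₀ : ∀ z ∈ re ⁻¹' {0}, ‖F z‖ ≤ 1 := by
    intro z hz
    have hle : ∀ x : ℂ, ‖phaseCpow x (q * (1 - z / 2))‖ ≤ ‖x‖ ^ q := fun x ↦ by
      simpa [show z.re = 0 from hz] using norm_phaseCpow_mul_le x q z
    refine (norm_clarksonPairing_le_l1 _ _ _ _).trans ?_
    have := mul_le_mul (add_le_add (hle a₁) (hle a₂)) (add_le_add (hle b₁) (hle b₂))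
      (by positivity) (by linarith [hs a₁, hs a₂])
    nlinarith [hs a₁, hs a₂, hs b₁, hs b₂]
  have hedge₁ : ∀ z ∈ re ⁻¹' {1}, ‖F z‖ ≤ √2 := by
    intro z hz
    have hle : ∀ x : ℂ, ‖phaseCpow x (q * (1 - z / 2))‖ ^ 2 ≤ ‖x‖ ^ q := fun x ↦ by
      have := norm_phaseCpow_mul_le x q z
      rw [show z.re = 1 from hz, show (1 : ℝ) - 1 / 2 = 1 / 2 by norm_num, ← sqrt_eq_rpow,
        le_sqrt (norm_nonneg _) (hs x)] at this
      exact this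
    refine (le_sqrt (norm_nonneg _) zero_le_two).mpr <|
      (norm_clarksonPairing_sq_le_l2 _ _ _ _).trans ?_
    have := mul_le_mul (add_le_add (hle a₁) (hle a₂)) (add_le_add (hle b₁) (hle b₂))
      (by positivity) (by linarith [hs a₁, hs a₂])
    nlinarith [hs a₁, hs a₂, hs b₁, hs b₂]
  have hθ : ((2 / p : ℝ) : ℂ) ∈ verticalClosedStrip 0 1 :=
    ⟨by simp only [ofReal_re]; positivity, by simp only [ofReal_re]; rw [div_le_one hp0]; linarith⟩
  have hFθ : F (2 / p : ℝ) = clarksonPairing a₁ a₂ b₁ b₂ := by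
    have hw : (q : ℂ) * (1 - ((2 / p : ℝ) : ℂ) / 2) = 1 := by
      have : q * (1 - 2 / p / 2) = 1 := by rw [hq]; field_simp
      exact_mod_cast this
    simp only [F, hw, phaseCpow_one]
  have key := norm_le_interp_of_mem_verticalClosedStrip₀₁' F hθ hF.diffContOnCl hbdd hedge₀ hedge₁
  rwa [hFθ, ofReal_re, one_rpow, one_mul, sqrt_eq_rpow, ← rpow_mul zero_le_two,
    show 1 / 2 * (2 / p) = 1 / p by ring] at key

lemma norm_conj_mul_rpow (x : ℂ) {p : ℝ} (hp : 1 < p) :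
    ‖conj x * ((‖x‖ ^ (p - 2) : ℝ) : ℂ)‖ = ‖x‖ ^ (p - 1) := by
  rw [norm_mul, norm_conj, norm_real, norm_of_nonneg (rpow_nonneg (norm_nonneg x) _),
    ← rpow_one_add' (norm_nonneg x) (by linarith)]
  ring_nf

lemma conj_mul_rpow_mul_self (x : ℂ) {p : ℝ} (hp : 0 < p) :
    conj x * ((‖x‖ ^ (p - 2) : ℝ) : ℂ) * x = ((‖x‖ ^ p : ℝ) : ℂ) := by
  have h : ‖x‖ ^ (2 : ℝ) * ‖x‖ ^ (p - 2) = ‖x‖ ^ p := by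
    rw [← rpow_add' (norm_nonneg x) (by linarith)]
    ring_nf
  rw [mul_right_comm, conj_mul', ← h, rpow_two]
  push_cast
  ring

/-- Test the pairing against the vector dual to `(a₁ + a₂, a₁ - a₂)` in `ℓ^p`. -/
lemma norm_add_rpow_add_norm_sub_rpow_le_two {p q : ℝ} (hp : 2 ≤ p) (hq : q = p / (p - 1))
    {a₁ a₂ : ℂ} (ha : ‖a₁‖ ^ q + ‖a₂‖ ^ q ≤ 1) :
    ‖a₁ + a₂‖ ^ p + ‖a₁ - a₂‖ ^ p ≤ 2 := by
  have hp0 : 0 < p := by linarith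
  have hp1 : p - 1 ≠ 0 := by linarith
  have hq0 : 0 < q := by rw [hq]; exact div_pos hp0 (by linarith)
  set S := ‖a₁ + a₂‖ ^ p + ‖a₁ - a₂‖ ^ p
  rcases (show 0 ≤ S by positivity).eq_or_lt with hS | hS
  · rw [← hS]; norm_num
  set c := S ^ (1 / q)
  have hc : 0 < c := rpow_pos_of_pos hS _
  have hcq : c ^ q = S := by rw [← rpow_mul hS.le, one_div_mul_cancel hq0.ne', rpow_one]
  set dual : ℂ → ℂ := fun x ↦ conj x * ((‖x‖ ^ (p - 2) : ℝ) : ℂ) / c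
  have hdual_norm : ∀ x, ‖dual x‖ ^ q = ‖x‖ ^ p / S := fun x ↦ by
    rw [norm_div, norm_conj_mul_rpow x (by linarith), norm_real, norm_of_nonneg hc.le,
      div_rpow (rpow_nonneg (norm_nonneg x) _) hc.le, ← rpow_mul (norm_nonneg x), hcq,
      show (p - 1) * q = p by rw [hq]; field_simp]
  have hdual_mul : ∀ x, dual x * x = ((‖x‖ ^ p / c : ℝ) : ℂ) := fun x ↦ by
    rw [div_mul_eq_mul_div, conj_mul_rpow_mul_self x hp0, ofReal_div]
  have hb : ‖dual (a₁ + a₂)‖ ^ q + ‖dual (a₁ - a₂)‖ ^ q ≤ 1 := by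
    rw [hdual_norm, hdual_norm, ← add_div, div_self hS.ne']
  have hpair :
      clarksonPairing a₁ a₂ (dual (a₁ + a₂)) (dual (a₁ - a₂)) = ((S ^ (1 / p) : ℝ) : ℂ) := by
    have h1q : 1 - 1 / q = 1 / p := by rw [hq]; field_simp; ring
    rw [clarksonPairing, hdual_mul, hdual_mul, ← ofReal_add, ← add_div, ← h1q, rpow_sub hS,
      rpow_one]
  have key := norm_clarksonPairing_le_two_rpow hp hq ha hb
  rw [hpair, norm_real, norm_of_nonneg (rpow_nonneg hS.le _)] at key
  exact (rpow_le_rpow_iff hS.le zero_le_two (by positivity)).mp key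

lemma norm_add_rpow_add_norm_sub_rpow_le_s15 {p q : ℝ} (hp : 2 ≤ p) (hq : q = p / (p - 1))
    (a₁ a₂ : ℂ) :
    ‖a₁ + a₂‖ ^ p + ‖a₁ - a₂‖ ^ p ≤ 2 * (‖a₁‖ ^ q + ‖a₂‖ ^ q) ^ (p - 1) := by
  have hp0 : 0 < p := by linarith
  have hp1 : p - 1 ≠ 0 := by linarith
  have hq0 : 0 < q := by rw [hq]; exact div_pos hp0 (by linarith)
  have hs := fun x : ℂ ↦ rpow_nonneg (norm_nonneg x) q
  set n := ‖a₁‖ ^ q + ‖a₂‖ ^ q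
  rcases (show 0 ≤ n by positivity).eq_or_lt with hn | hn
  · have hzero : ∀ x : ℂ, ‖x‖ ^ q = 0 → x = 0 := fun x hx ↦
      norm_eq_zero.mp ((rpow_eq_zero (norm_nonneg x) hq0.ne').mp hx)
    have hn' : ‖a₁‖ ^ q + ‖a₂‖ ^ q = 0 := hn.symm
    rw [hzero a₁ (by linarith [hs a₁, hs a₂]), hzero a₂ (by linarith [hs a₁, hs a₂])]
    simp only [add_zero, sub_zero, norm_zero, zero_rpow hp0.ne']
    positivity
  set c := n ^ (1 / q)
  have hc : 0 < c := rpow_pos_of_pos hn _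
  have hscale : ∀ x : ℂ, ‖x / c‖ ^ q = ‖x‖ ^ q / n := fun x ↦ by
    rw [norm_div, norm_real, norm_of_nonneg hc.le, div_rpow (norm_nonneg x) hc.le,
      ← rpow_mul hn.le, one_div_mul_cancel hq0.ne', rpow_one]
  have key := norm_add_rpow_add_norm_sub_rpow_le_two hp hq (a₁ := a₁ / c) (a₂ := a₂ / c)
    (by rw [hscale, hscale, ← add_div, div_self hn.ne'])
  have hcp : c ^ p = n ^ (p - 1) := by
    rw [← rpow_mul hn.le]; congr 1; rw [hq]; field_simp
  rwa [← add_div, ← sub_div, norm_div, norm_div, norm_real, norm_of_nonneg hc.le,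
    div_rpow (norm_nonneg _) hc.le, div_rpow (norm_nonneg _) hc.le, ← add_div,
    div_le_iff₀ (rpow_pos_of_pos hc p), hcp] at key

lemma ofReal_rpow_add_ofReal_rpow_le_iff {x y u v p q r : ℝ} (hx : 0 ≤ x) (hy : 0 ≤ y)
    (hu : 0 ≤ u) (hv : 0 ≤ v) (hp : 0 ≤ p) (hq : 0 ≤ q) (hr : 0 ≤ r) :
    ENNReal.ofReal x ^ p + ENNReal.ofReal y ^ p ≤
        2 * (ENNReal.ofReal u ^ q + ENNReal.ofReal v ^ q) ^ r ↔
      x ^ p + y ^ p ≤ 2 * (u ^ q + v ^ q) ^ r := by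
  rw [ENNReal.ofReal_rpow_of_nonneg hx hp, ENNReal.ofReal_rpow_of_nonneg hy hp,
    ENNReal.ofReal_rpow_of_nonneg hu hq, ENNReal.ofReal_rpow_of_nonneg hv hq,
    ← ENNReal.ofReal_add (by positivity) (by positivity),
    ← ENNReal.ofReal_add (by positivity) (by positivity),
    ENNReal.ofReal_rpow_of_nonneg (by positivity) hr, ← ENNReal.ofReal_ofNat 2,
    ← ENNReal.ofReal_mul zero_le_two, ENNReal.ofReal_le_ofReal_iff (by positivity)]

lemma enorm_add_rpow_add_enorm_sub_rpow_le {p q : ℝ} (hp : 2 ≤ p) (hq : q = p / (p - 1))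
    (a₁ a₂ : ℂ) :
    ‖a₁ + a₂‖ₑ ^ p + ‖a₁ - a₂‖ₑ ^ p ≤ 2 * (‖a₁‖ₑ ^ q + ‖a₂‖ₑ ^ q) ^ (p - 1) := by
  have hq0 : 0 ≤ q := by rw [hq]; exact div_nonneg (by linarith) (by linarith)
  simp only [← ofReal_norm]
  rw [ofReal_rpow_add_ofReal_rpow_le_iff (norm_nonneg _) (norm_nonneg _) (norm_nonneg _)
    (norm_nonneg _) (by linarith) hq0 (by linarith)]
  exact norm_add_rpow_add_norm_sub_rpow_le_s15 hp hq a₁ a₂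

section Integral

variable {Ω E : Type*} [MeasurableSpace Ω] {μ : Measure Ω} [NormedAddCommGroup E]

lemma eLpNorm_ofReal_rpow (f : Ω → E) {p : ℝ} (hp : 0 < p) :
    eLpNorm f (ENNReal.ofReal p) μ ^ p = ∫⁻ x, ‖f x‖ₑ ^ p ∂μ := by
  have := eLpNorm_nnreal_pow_eq_lintegral (f := f) (μ := μ) (p := p.toNNReal)
    (by simpa using hp)
  rwa [Real.coe_toNNReal _ hp.le] at this

lemma lintegral_enorm_rpow_add_enorm_rpow_rpow_le {f g : Ω → E}
    (hf : AEStronglyMeasurable f μ) (hg : AEStronglyMeasurable g μ) {q s : ℝ} (hq : 0 < q)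
    (hs : 1 ≤ s) :
    ∫⁻ x, (‖f x‖ₑ ^ q + ‖g x‖ₑ ^ q) ^ s ∂μ ≤
      (eLpNorm f (ENNReal.ofReal (q * s)) μ ^ q +
        eLpNorm g (ENNReal.ofReal (q * s)) μ ^ q) ^ s := by
  have hqs : 0 < q * s := by positivity
  have hpow : ∀ h : Ω → E, (∫⁻ x, (‖h x‖ₑ ^ q) ^ s ∂μ) ^ (1 / s) =
      eLpNorm h (ENNReal.ofReal (q * s)) μ ^ q := fun h ↦ by
    simp_rw [← ENNReal.rpow_mul]
    rw [← eLpNorm_ofReal_rpow h hqs, ← ENNReal.rpow_mul, mul_one_div,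
      mul_div_cancel_right₀ q (by positivity)]
  have mink := ENNReal.lintegral_Lp_add_le (hf.enorm.pow_const q) (hg.enorm.pow_const q) hs
  rw [hpow, hpow, one_div, ENNReal.rpow_inv_le_iff (by linarith)] at mink
  exact mink

lemma eLpNorm_add_rpow_add_eLpNorm_sub_rpow_le {p q : ℝ} (hp : 2 ≤ p) (hq : q = p / (p - 1))
    {f g : Ω → ℂ} (hf : AEStronglyMeasurable f μ) (hg : AEStronglyMeasurable g μ) :
    eLpNorm (f + g) (ENNReal.ofReal p) μ ^ p + eLpNorm (f - g) (ENNReal.ofReal p) μ ^ p ≤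
      2 * (eLpNorm f (ENNReal.ofReal p) μ ^ q + eLpNorm g (ENNReal.ofReal p) μ ^ q) ^ (p - 1) := by
  have hp0 : 0 < p := by linarith
  have hq0 : 0 < q := by rw [hq]; exact div_pos hp0 (by linarith)
  have hqp : q * (p - 1) = p := by rw [hq]; field_simp [show p - 1 ≠ 0 by linarith]
  calc eLpNorm (f + g) (ENNReal.ofReal p) μ ^ p + eLpNorm (f - g) (ENNReal.ofReal p) μ ^ p
      = ∫⁻ x, ‖f x + g x‖ₑ ^ p + ‖f x - g x‖ₑ ^ p ∂μ := by
        rw [eLpNorm_ofReal_rpow _ hp0, eLpNorm_ofReal_rpow _ hp0]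
        exact (lintegral_add_left' ((hf.add hg).enorm.pow_const p) _).symm
    _ ≤ ∫⁻ x, 2 * (‖f x‖ₑ ^ q + ‖g x‖ₑ ^ q) ^ (p - 1) ∂μ :=
        lintegral_mono fun x ↦ enorm_add_rpow_add_enorm_sub_rpow_le hp hq (f x) (g x)
    _ = 2 * ∫⁻ x, (‖f x‖ₑ ^ q + ‖g x‖ₑ ^ q) ^ (p - 1) ∂μ :=
        lintegral_const_mul' _ _ ENNReal.ofNat_ne_top
    _ ≤ _ := by
        gcongr
        simpa only [hqp] using
          lintegral_enorm_rpow_add_enorm_rpow_rpow_le hf hg hq0 (by linarith : 1 ≤ p - 1)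

end Integral

theorem clarkson_second_inequality_ge_two_general
    {Ω : Type*} [MeasurableSpace Ω] (μ : Measure Ω) (p q : ℝ) (hp : 2 ≤ p)
    (hq : q = p / (p - 1))
    (f g : Lp ℂ (ENNReal.ofReal p) μ) :
    ‖f‖ ^ q + ‖g‖ ^ q ≥
      ((1 / 2) * (‖f + g‖ ^ p + ‖f - g‖ ^ p)) ^ (1 / (p - 1)) := by
  have hq0 : 0 ≤ q := by rw [hq]; exact div_nonneg (by linarith) (by linarith)
  have hnonneg (h : Lp ℂ (ENNReal.ofReal p) μ) : 0 ≤ ‖h‖ := ENNReal.toReal_nonneg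
  have hnorm (h : Lp ℂ (ENNReal.ofReal p) μ) : eLpNorm h (ENNReal.ofReal p) μ = .ofReal ‖h‖ :=
    (ENNReal.ofReal_toReal (Lp.eLpNorm_ne_top h)).symm
  have key := eLpNorm_add_rpow_add_eLpNorm_sub_rpow_le hp hq
    (Lp.aestronglyMeasurable f) (Lp.aestronglyMeasurable g)
  rw [← eLpNorm_congr_ae (Lp.coeFn_add f g), ← eLpNorm_congr_ae (Lp.coeFn_sub f g), hnorm, hnorm,
    hnorm, hnorm, ofReal_rpow_add_ofReal_rpow_le_iff (hnonneg _) (hnonneg _) (hnonneg _)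
    (hnonneg _) (by linarith) hq0 (by linarith)] at key
  have hsum : 0 ≤ ‖f‖ ^ q + ‖g‖ ^ q :=
    add_nonneg (rpow_nonneg (hnonneg f) q) (rpow_nonneg (hnonneg g) q)
  calc ((1 / 2) * (‖f + g‖ ^ p + ‖f - g‖ ^ p)) ^ (1 / (p - 1))
      ≤ ((‖f‖ ^ q + ‖g‖ ^ q) ^ (p - 1)) ^ (1 / (p - 1)) := by
        refine rpow_le_rpow ?_ (by linarith) (one_div_nonneg.mpr (by linarith))
        have := add_nonneg (rpow_nonneg (hnonneg (f + g)) p) (rpow_nonneg (hnonneg (f - g)) p)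
        linarith
    _ = ‖f‖ ^ q + ‖g‖ ^ q := by
        rw [one_div, rpow_rpow_inv hsum (by linarith)]

theorem clarkson_second_inequality_ge_two
    {Ω : Type*} [MeasurableSpace Ω] (μ : Measure Ω) (p q : ℝ) (hp : 2 ≤ p)
    (hq : q = p / (p - 1)) [Fact (1 ≤ ENNReal.ofReal p)]
    (f g : Lp ℂ (ENNReal.ofReal p) μ) :
    ‖f‖ ^ q + ‖g‖ ^ q ≥
      ((1 / 2) * (‖f + g‖ ^ p + ‖f - g‖ ^ p)) ^ (1 / (p - 1)) :=
  clarkson_second_inequality_ge_two_general μ p q hp hq f g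
end
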